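/- If m = ⌊√(2n)⌋ and n ≥ 3, then (m-1)(m-2)/2 < n - 1. Consequently, if n-1 objects are distributed among m columns with at most m-c-1 objects in column c for c ≤ m-1 and 0 objects in column m, we reach a contradiction; hence some column j ≤ m-1 contains at least m-j objects. -/

import Mathlib

/-!
Since `m * m ≤ 2 * n`, we get `(m - 1) * (m - 2) = m * m - 3 * m + 2 < 2 * (n - 1)` as soon as
`m ≥ 2`. If every column `j < m` held at most `m - 1 - j` objects and column `m` none, there would
be at most `∑_{j < m} (m - 1 - j) = (m - 1) * (m - 2) / 2 < n - 1` objects in total.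
-/

open Finset

lemma sub_one_mul_sub_two_div_two_lt {m n : ℕ} (hm : 2 ≤ m) (hmn : m * m ≤ 2 * n) :
    (m - 1) * (m - 2) / 2 < n - 1 := by
  obtain ⟨a, rfl⟩ : ∃ a, m = a + 2 := ⟨m - 2, by omega⟩
  rw [Nat.div_lt_iff_lt_mul two_pos]
  simp only [Nat.add_sub_cancel, show a + 2 - 1 = a + 1 from rfl]
  have : (a + 1) * a + 3 * a + 4 ≤ 2 * n := by nlinarith
  omega

lemma sum_Ico_one_sub_one_sub (m : ℕ) :
    ∑ c ∈ Ico 1 m, (m - 1 - c) = (m - 1) * (m - 2) / 2 := by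
  cases m with
  | zero => simp
  | succ k =>
    simp only [Nat.add_sub_cancel]
    rw [sum_Ico_reflect (fun i => i) 1 le_rfl, Nat.sub_self, ← range_eq_Ico, sum_range_id]
    rfl

lemma exists_sub_le_of_lt_sum_Icc {m : ℕ} {s : ℕ → ℕ} (hsm : s m = 0)
    (hsum : (m - 1) * (m - 2) / 2 < ∑ c ∈ Icc 1 m, s c) :
    ∃ j, 1 ≤ j ∧ j ≤ m - 1 ∧ m - j ≤ s j := by
  have hIco : ∑ c ∈ Ico 1 m, s c = ∑ c ∈ Icc 1 m, s c :=
    sum_subset Ico_subset_Icc_self fun c hc hc' => by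
      obtain rfl : c = m := by simp only [mem_Icc, mem_Ico] at hc hc'; omega
      exact hsm
  by_contra! hsmall
  have hle : ∑ c ∈ Ico 1 m, s c ≤ ∑ c ∈ Ico 1 m, (m - 1 - c) :=
    sum_le_sum fun c hc => by
      simp only [mem_Ico] at hc
      have := hsmall c hc.1 (by omega)
      omega
  rw [hIco, sum_Ico_one_sub_one_sub] at hle
  omega

/-- Pigeonhole counting step in the one-shot timestamp lower bound:
with `m = ⌊√(2n)⌋` and `n ≥ 3`, we have `(m-1)(m-2)/2 < n-1`; consequently,
if `n-1` objects are distributed among columns `1..m` with column `m` empty,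
some column `j ≤ m-1` holds at least `m - j` objects. -/
theorem stmt_0 (n m : ℕ) (hn : 3 ≤ n) (hm : m = Nat.sqrt (2 * n))
    (s : ℕ → ℕ) (hsum : n - 1 ≤ ∑ c ∈ Finset.Icc 1 m, s c) (hsm : s m = 0) :
    (m - 1) * (m - 2) / 2 < n - 1 ∧ ∃ j, 1 ≤ j ∧ j ≤ m - 1 ∧ m - j ≤ s j := by
  have hm2 : 2 ≤ m := hm ▸ Nat.le_sqrt.mpr (by omega)
  have hmsq : m * m ≤ 2 * n := hm ▸ Nat.sqrt_le _
  have hlt := sub_one_mul_sub_two_div_two_lt hm2 hmsq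
  exact ⟨hlt, exists_sub_le_of_lt_sum_Icc hsm (hlt.trans_le hsum)⟩
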